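/- Let R be an integral domain of characteristic 2, let S = R[x] be a polynomial ring, and let a be a nonzero element of R. Let the group Z/2 act on S by R-algebra automorphisms, with the generator sending x to x + a. Then the ring of invariants S^{Z/2} equals R[u], where u = x(x+a). -/

import Mathlib

/-!
The automorphism `x ↦ x + a` is `Polynomial.taylor a`; it preserves degrees and, as `a + a = 0`,
fixes the monic quadratic `u = x (x + a)`. Hence it commutes with division with remainder by `u`,
so an invariant `f = r + u q` has invariant remainder `r` and quotient `q`, and by induction on the
degree it suffices to treat invariants of degree `≤ 1`. For those, comparing constant terms gives
`f.coeff 1 * a = 0`, so `f` is a constant since `a` is not a zero divisor. Conversely, the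
invariants form a subalgebra (an equalizer) containing `u`.
-/

open Polynomial

namespace Polynomial

section

variable {R : Type*} [CommRing R] {r : R} {u : R[X]}

theorem taylor_modByMonic_and_divByMonic (hu : u.Monic) (f : R[X]) :
    taylor r (f %ₘ u) = taylor r f %ₘ taylor r u ∧
      taylor r (f /ₘ u) = taylor r f /ₘ taylor r u := by
  nontriviality R
  have hsum : taylor r (f %ₘ u) + taylor r u * taylor r (f /ₘ u) = taylor r f := by
    rw [← taylor_mul, ← map_add, modByMonic_add_div]
  have hdeg : (taylor r (f %ₘ u)).degree < (taylor r u).degree := by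
    simpa only [degree_taylor] using degree_modByMonic_lt f hu
  have hmonic : (taylor r u).Monic := by
    rw [Monic, leadingCoeff_taylor]; exact hu
  obtain ⟨hdiv, hmod⟩ := div_modByMonic_unique _ _ hmonic ⟨hsum, hdeg⟩
  exact ⟨hmod.symm, hdiv.symm⟩

theorem taylor_eq_self_of_mem_adjoin (hu : taylor r u = u) {f : R[X]}
    (hf : f ∈ Algebra.adjoin R {u}) : taylor r f = f :=
  Algebra.adjoin_le (S := AlgHom.equalizer (taylorAlgHom r) (AlgHom.id R R[X]))
    (Set.singleton_subset_iff.2 hu) hf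

theorem mem_adjoin_of_taylor_eq_self (hu : u.Monic) (hu₀ : 0 < u.natDegree)
    (htu : taylor r u = u)
    (hlow : ∀ p : R[X], p.natDegree < u.natDegree → taylor r p = p →
      p ∈ Algebra.adjoin R {u}) :
    ∀ f : R[X], taylor r f = f → f ∈ Algebra.adjoin R {u} := by
  intro f
  induction hn : f.natDegree using Nat.strong_induction_on generalizing f with
  | _ n ih =>
    intro hf
    by_cases hlt : f.natDegree < u.natDegree
    · exact hlow f hlt hf
    obtain ⟨hmod, hdiv⟩ := taylor_modByMonic_and_divByMonic (r := r) hu f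
    rw [hf, htu] at hmod hdiv
    have hu1 : u ≠ 1 := by rintro rfl; simp at hu₀
    have hq : (f /ₘ u).natDegree < n := by
      rw [natDegree_divByMonic f hu]; omega
    rw [← modByMonic_add_div f u]
    exact add_mem (hlow _ (natDegree_modByMonic_lt f hu hu1) hmod)
      (mul_mem (Algebra.self_mem_adjoin_singleton R u) (ih _ hq _ rfl hdiv))

end

theorem eq_C_of_taylor_eq_self_of_natDegree_le_one {R : Type*} [CommRing R] [NoZeroDivisors R]
    {a : R} (ha : a ≠ 0) {p : R[X]} (hp : p.natDegree ≤ 1) (h : taylor a p = p) :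
    p = C (p.coeff 0) := by
  have hlin := eq_X_add_C_of_natDegree_le_one hp
  have hcoeff : p.coeff 1 * a = 0 := by
    have h0 := congrArg (coeff · 0) h
    simp only [taylor_coeff_zero] at h0
    conv_lhs at h0 => rw [hlin]
    simpa using h0
  rw [hlin, (mul_eq_zero.1 hcoeff).resolve_right ha]
  simp

theorem taylor_X_mul_X_add_C {R : Type*} [CommRing R] (h2 : (2 : R) = 0) (a : R) :
    taylor a (X * (X + C a)) = X * (X + C a) := by
  have haa : C a + C a = 0 := by rw [← two_mul, ← C_ofNat, ← C_mul, h2, zero_mul, C_0]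
  rw [taylor_mul, map_add, taylor_X, taylor_C, add_assoc, haa, add_zero, mul_comm]

end Polynomial

theorem invariants_of_involution_eq_adjoin_x_mul_x_add_a
    (R : Type*) [CommRing R] [IsDomain R] (h2 : (2 : R) = 0)
    (a : R) (ha : a ≠ 0) :
    ∀ f : Polynomial R,
      Polynomial.aeval (X + C a) f = f ↔
        f ∈ Algebra.adjoin R ({X * (X + C a)} : Set (Polynomial R)) := by
  intro f
  have hmonic : (X * (X + C a)).Monic := monic_X.mul (monic_X_add_C a)
  have hdeg : (X * (X + C a)).natDegree = 2 := by
    rw [natDegree_mul X_ne_zero (X_add_C_ne_zero a), natDegree_X, natDegree_X_add_C]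
  rw [← comp_eq_aeval, ← taylor_apply]
  refine ⟨mem_adjoin_of_taylor_eq_self hmonic (by omega) (taylor_X_mul_X_add_C h2 a) ?_ f,
    taylor_eq_self_of_mem_adjoin (taylor_X_mul_X_add_C h2 a)⟩
  intro p hp hpf
  rw [eq_C_of_taylor_eq_self_of_natDegree_le_one ha (by omega) hpf]
  exact Subalgebra.algebraMap_mem _ _
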